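/- arXiv:1501.02320 — 2 statements merged into one kernel-verified Lean document; each statement's English description precedes it below -/
import Mathlib

section
/- Let Θ* ≻ 0 and Θ ≻ 0 be p×p precision matrices, and suppose there exists a pair (i,j), i ≠ j, with Θ*(i,j) ≠ 0 but Θ(i,j) = 0. Then KL(N(0, Θ*⁻¹) || N(0, Θ⁻¹)) ≥ (1/2) log(c_{Θ*}), where c_{Θ*} = min_{(i,j): Θ*(i,j) ≠ 0} Θ*(i,i)Θ*(j,j)/(Θ*(i,i)Θ*(j,j) − Θ*(i,j)²). -/
/-!
Put `Σ = Θ*⁻¹`, `a = Θ*ᵢᵢ`, `b = Θ*ⱼⱼ`, `c = Θ*ᵢⱼ`, `d = ab - c²` and `N = Σ + (c/d)(eᵢeⱼᵀ + eⱼeᵢᵀ)`.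
Since `Θᵢⱼ = 0`, `tr(ΘN) = tr(ΘΣ)`, and a rank-two determinant computation gives
`det N = det Σ · ab/d`. Since `xᵀΣx ≥ 2yᵀx - yᵀΘ*y` for every `y`, choosing `y` supported on
`{i, j}` gives `xᵀNx ≥ (b xᵢ² + a xⱼ²)/d`, so `N ≻ 0`. Hence `tr(ΘN) ≥ p + log det(ΘN)`, as
`λ - 1 ≥ log λ` on the positive spectrum of `ΘN`; rearranged, this is
`2 KL ≥ log(ab/d) ≥ log c_{Θ*}`.
-/

open Matrix
open scoped MatrixOrder

namespace Matrix

variable {n R : Type*}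

theorem PosDef.mul_sub_sq_pos {M : Matrix n n ℝ} (hM : M.PosDef) {a b : n} (hab : a ≠ b) :
    0 < M a a * M b b - M a b ^ 2 := by
  have hinj : Function.Injective ![a, b] := by
    intro k l; fin_cases k <;> fin_cases l <;> simp [hab, hab.symm]
  have := (hM.submatrix hinj).det_pos
  rw [det_fin_two] at this
  simpa [sq, ← hM.1.apply a b] using this

theorem PosDef.one_le_mul_div_mul_sub_sq {M : Matrix n n ℝ} (hM : M.PosDef) {a b : n}
    (hab : a ≠ b) : 1 ≤ M a a * M b b / (M a a * M b b - M a b ^ 2) := by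
  rw [one_le_div (hM.mul_sub_sq_pos hab)]
  nlinarith [sq_nonneg (M a b)]

theorem PosSemidef.two_mul_dotProduct_mulVec_sub_le [Fintype n] {A : Matrix n n ℝ}
    (hA : A.PosSemidef) (u y : n → ℝ) :
    2 * (y ⬝ᵥ (A *ᵥ u)) - y ⬝ᵥ (A *ᵥ y) ≤ u ⬝ᵥ (A *ᵥ u) := by
  have hsymm : u ⬝ᵥ (A *ᵥ y) = y ⬝ᵥ (A *ᵥ u) := by
    rw [dotProduct_mulVec, ← mulVec_transpose, ← conjTranspose_eq_transpose_of_trivial, hA.1,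
      dotProduct_comm]
  have := hA.dotProduct_mulVec_nonneg (u - y)
  simp only [star_trivial, mulVec_sub, dotProduct_sub, sub_dotProduct, hsymm] at this
  linarith

variable [DecidableEq n]

def symmSingle [Zero R] [One R] [Add R] (i j : n) : Matrix n n R := single i j 1 + single j i 1

theorem transpose_symmSingle [AddCommMonoid R] [One R] (i j : n) :
    (symmSingle i j : Matrix n n R)ᵀ = symmSingle i j := by
  simp [symmSingle, transpose_single, add_comm]

variable [Fintype n]

theorem dotProduct_symmSingle_mulVec [CommSemiring R] (i j : n) (x : n → R) :
    x ⬝ᵥ (symmSingle i j *ᵥ x) = 2 * (x i * x j) := by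
  simp only [symmSingle, add_mulVec, single_mulVec_eq, dotProduct_add, dotProduct_smul,
    dotProduct_single, one_mul, mul_one, smul_eq_mul]
  ring

theorem trace_mul_symmSingle [CommSemiring R] (A : Matrix n n R) (i j : n) :
    (A * symmSingle i j).trace = A j i + A i j := by
  simp [symmSingle, mul_add, trace_mul_single]

theorem det_one_add_smul_mul_symmSingle [CommRing R] (A : Matrix n n R) (μ : R) (i j : n) :
    (1 + μ • (A * symmSingle i j)).det =
      (1 + μ * A i j) * (1 + μ * A j i) - μ ^ 2 * A i i * A j j := by
  set P : Matrix n (Fin 2) R := (of ![Pi.single i 1, Pi.single j 1])ᵀ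
  have hK : (symmSingle i j : Matrix n n R) = P * !![(0 : R), 1; 1, 0] * Pᵀ := by
    ext k l
    simp [P, symmSingle, mul_apply, Fin.sum_univ_two, single_apply, Pi.single_apply]
    grind
  have hPAP : Pᵀ * A * P = !![A i i, A i j; A j i, A j j] := by
    ext s t
    fin_cases s <;> fin_cases t <;> simp [P, mul_apply, Pi.single_apply]
  rw [hK, ← Matrix.mul_assoc, ← Matrix.mul_assoc, ← smul_mul, det_one_add_mul_comm,
    Matrix.mul_smul, ← Matrix.mul_assoc, ← Matrix.mul_assoc, hPAP, det_fin_two]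
  simp
  ring

theorem PosDef.card_add_log_det_le_trace {C : Matrix n n ℝ} (hC : C.PosDef) :
    (Fintype.card n : ℝ) + Real.log C.det ≤ C.trace := by
  have hpos := hC.eigenvalues_pos
  rw [hC.1.det_eq_prod_eigenvalues, hC.1.trace_eq_sum_eigenvalues]
  simp only [RCLike.ofReal_real_eq_id, id]
  rw [Real.log_prod fun k _ => (hpos k).ne', ← Finset.card_univ, Finset.card_eq_sum_ones,
    Nat.cast_sum, Nat.cast_one, ← Finset.sum_add_distrib]
  gcongr with k
  linarith [Real.log_le_sub_one_of_pos (hpos k)]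

theorem PosDef.card_add_log_det_mul_le_trace_mul {A B : Matrix n n ℝ} (hA : A.PosDef)
    (hB : B.PosDef) : (Fintype.card n : ℝ) + Real.log (A * B).det ≤ (A * B).trace := by
  set S := CFC.sqrt B
  have hSS : S * S = B := CFC.sqrt_mul_sqrt_self B hB.posSemidef.nonneg
  have hSH : Sᴴ = S := (CFC.sqrt_nonneg B).posSemidef.1
  have hSunit : IsUnit S := by
    rw [isUnit_iff_isUnit_det, isUnit_iff_ne_zero]
    intro h
    have := hB.det_pos
    rw [← hSS, det_mul, h, zero_mul] at this
    exact lt_irrefl _ this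
  have hC : (Sᴴ * A * S).PosDef :=
    hA.conjTranspose_mul_mul_same (mulVec_injective_iff_isUnit.mpr hSunit)
  have htr : (Sᴴ * A * S).trace = (A * B).trace := by
    rw [hSH, trace_mul_cycle, hSS, trace_mul_comm]
  have hdet : (Sᴴ * A * S).det = (A * B).det := by
    rw [hSH, det_mul, det_mul, det_mul, ← hSS, det_mul]; ring
  simpa only [htr, hdet] using hC.card_add_log_det_le_trace

section PosDef

variable {Θ : Matrix n n ℝ} {i j : n}

theorem PosDef.div_le_dotProduct_inv_mulVec (hΘ : Θ.PosDef) (hij : i ≠ j) (x : n → ℝ) :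
    (Θ j j * x i ^ 2 - 2 * Θ i j * x i * x j + Θ i i * x j ^ 2) /
      (Θ i i * Θ j j - Θ i j ^ 2) ≤ x ⬝ᵥ (Θ⁻¹ *ᵥ x) := by
  set d := Θ i i * Θ j j - Θ i j ^ 2
  have hd : 0 < d := hΘ.mul_sub_sq_pos hij
  have hji : Θ j i = Θ i j := by simpa using hΘ.1.apply i j
  -- `y` solves the restriction of `Θ y = x` to the coordinates `i, j`
  set α := (Θ j j * x i - Θ i j * x j) / d
  set β := (Θ i i * x j - Θ i j * x i) / d
  set y : n → ℝ := α • Pi.single i 1 + β • Pi.single j 1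
  have hyx : y ⬝ᵥ x = α * x i + β * x j := by simp [y, add_dotProduct]
  have hyΘy : y ⬝ᵥ (Θ *ᵥ y) = α ^ 2 * Θ i i + 2 * α * β * Θ i j + β ^ 2 * Θ j j := by
    simp only [y, mulVec_add, mulVec_smul, mulVec_single, MulOpposite.op_one, one_smul,
      dotProduct_add, dotProduct_smul, add_dotProduct, smul_dotProduct, single_dotProduct, col_apply,
      one_mul, smul_eq_mul, hji]
    ring
  have hΘinv : Θ *ᵥ (Θ⁻¹ *ᵥ x) = x := by
    rw [mulVec_mulVec, mul_nonsing_inv _ (isUnit_iff_ne_zero.mpr hΘ.det_pos.ne'), one_mulVec]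
  have h := hΘ.posSemidef.two_mul_dotProduct_mulVec_sub_le (Θ⁻¹ *ᵥ x) y
  rw [hΘinv, hyx, hyΘy, dotProduct_comm] at h
  calc _ = 2 * (α * x i + β * x j) - (α ^ 2 * Θ i i + 2 * α * β * Θ i j + β ^ 2 * Θ j j) := by
        simp only [α, β]
        field_simp
        ring
    _ ≤ _ := h

theorem PosDef.inv_add_smul_symmSingle (hΘ : Θ.PosDef) (hij : i ≠ j) :
    (Θ⁻¹ + (Θ i j / (Θ i i * Θ j j - Θ i j ^ 2)) • symmSingle i j).PosDef := by
  set d := Θ i i * Θ j j - Θ i j ^ 2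
  have hd : 0 < d := hΘ.mul_sub_sq_pos hij
  have hherm : (Θ⁻¹ + (Θ i j / d) • symmSingle i j).IsHermitian := by
    refine hΘ.inv.1.add (IsHermitian.smul ?_ (IsSelfAdjoint.all _))
    rw [IsHermitian, conjTranspose_eq_transpose_of_trivial, transpose_symmSingle]
  refine .of_dotProduct_mulVec_pos hherm fun x hx => ?_
  rw [star_trivial, add_mulVec, dotProduct_add, smul_mulVec, dotProduct_smul,
    dotProduct_symmSingle_mulVec, smul_eq_mul]
  by_cases hx0 : x i = 0 ∧ x j = 0
  · simpa [hx0.1, hx0.2] using hΘ.inv.dotProduct_mulVec_pos hx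
  have hnum : 0 < Θ j j * x i ^ 2 + Θ i i * x j ^ 2 := by
    have hii : 0 < Θ i i := hΘ.diag_pos
    have hjj : 0 < Θ j j := hΘ.diag_pos
    rcases not_and_or.mp hx0 with h | h
    · exact add_pos_of_pos_of_nonneg (mul_pos hjj (pow_two_pos_of_ne_zero h))
        (mul_nonneg hii.le (sq_nonneg _))
    · exact add_pos_of_nonneg_of_pos (mul_nonneg hjj.le (sq_nonneg _))
        (mul_pos hii (pow_two_pos_of_ne_zero h))
  calc 0 < (Θ j j * x i ^ 2 + Θ i i * x j ^ 2) / d := div_pos hnum hd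
    _ = (Θ j j * x i ^ 2 - 2 * Θ i j * x i * x j + Θ i i * x j ^ 2) / d +
          Θ i j / d * (2 * (x i * x j)) := by ring
    _ ≤ _ := by gcongr; exact hΘ.div_le_dotProduct_inv_mulVec hij x

theorem PosDef.det_inv_add_smul_symmSingle (hΘ : Θ.PosDef) (hij : i ≠ j) :
    (Θ⁻¹ + (Θ i j / (Θ i i * Θ j j - Θ i j ^ 2)) • symmSingle i j).det =
      Θ⁻¹.det * (Θ i i * Θ j j / (Θ i i * Θ j j - Θ i j ^ 2)) := by
  set d := Θ i i * Θ j j - Θ i j ^ 2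
  have hd : d ≠ 0 := (hΘ.mul_sub_sq_pos hij).ne'
  have hji : Θ j i = Θ i j := by simpa using hΘ.1.apply i j
  have hfactor : Θ⁻¹ + (Θ i j / d) • symmSingle i j =
      Θ⁻¹ * (1 + (Θ i j / d) • (Θ * symmSingle i j)) := by
    rw [Matrix.mul_add, Matrix.mul_one, Matrix.mul_smul, ← Matrix.mul_assoc,
      nonsing_inv_mul _ (isUnit_iff_ne_zero.mpr hΘ.det_pos.ne'), Matrix.one_mul]
  rw [hfactor, det_mul, det_one_add_smul_mul_symmSingle, hji]
  congr 1
  field_simp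
  ring

end PosDef

end Matrix

/-- If the graphical model of `Θ` misses an edge `(i,j)` of the graphical model of `Θ*`,
then `KL(N(0,Θ*⁻¹) ‖ N(0,Θ⁻¹)) ≥ ½ log c_{Θ*}`, where the KL divergence between the
zero-mean Gaussians is `½ (tr(Θ Θ*⁻¹) − p + log(det Θ*/det Θ))` and
`c_{Θ*} = min_{(a,b): a≠b, Θ*ₐᵦ≠0} Θ*ₐₐΘ*ᵦᵦ/(Θ*ₐₐΘ*ᵦᵦ − Θ*ₐᵦ²)`. -/
theorem stmt5 {p : ℕ} (Θstar Θ : Matrix (Fin p) (Fin p) ℝ)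
    (hstar : Θstar.PosDef) (hΘ : Θ.PosDef)
    (i j : Fin p) (hij : i ≠ j) (hne : Θstar i j ≠ 0) (hzero : Θ i j = 0) :
    (1 / 2) * ((Θ * Θstar⁻¹).trace - (p : ℝ) + Real.log (Θstar.det / Θ.det)) ≥
      (1 / 2) * Real.log (sInf {r : ℝ | ∃ a b : Fin p, a ≠ b ∧ Θstar a b ≠ 0 ∧
        r = Θstar a a * Θstar b b / (Θstar a a * Θstar b b - (Θstar a b) ^ 2)}) := by
  set S := {r : ℝ | ∃ a b : Fin p, a ≠ b ∧ Θstar a b ≠ 0 ∧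
    r = Θstar a a * Θstar b b / (Θstar a a * Θstar b b - (Θstar a b) ^ 2)}
  set r := Θstar i i * Θstar j j / (Θstar i i * Θstar j j - Θstar i j ^ 2)
  set N := Θstar⁻¹ + (Θstar i j / (Θstar i i * Θstar j j - Θstar i j ^ 2)) • symmSingle i j
  have hN : N.PosDef := hstar.inv_add_smul_symmSingle hij
  have htr : (Θ * N).trace = (Θ * Θstar⁻¹).trace := by
    have hji : Θ j i = 0 := by rw [← hΘ.1.apply j i, hzero, star_zero]
    simp [N, Matrix.mul_add, trace_mul_symmSingle, hzero, hji]
  have hr : 0 < r := by linarith [hstar.one_le_mul_div_mul_sub_sq hij]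
  have hdet : Real.log (Θ * N).det = Real.log Θ.det - Real.log Θstar.det + Real.log r := by
    rw [det_mul, hstar.det_inv_add_smul_symmSingle hij, det_nonsing_inv, Ring.inverse_eq_inv',
      Real.log_mul hΘ.det_pos.ne' (mul_pos (inv_pos.mpr hstar.det_pos) hr).ne',
      Real.log_mul (inv_pos.mpr hstar.det_pos).ne' hr.ne', Real.log_inv]
    ring
  have hlogdet_le := hΘ.card_add_log_det_mul_le_trace_mul hN
  rw [Fintype.card_fin, hdet, htr] at hlogdet_le
  have hS : ∀ s ∈ S, 1 ≤ s := by
    rintro _ ⟨a, b, hab, -, rfl⟩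
    exact hstar.one_le_mul_div_mul_sub_sq hab
  have hrS : r ∈ S := ⟨i, j, hij, hne, rfl⟩
  have hlog : Real.log (sInf S) ≤ Real.log r :=
    Real.log_le_log (by linarith [le_csInf ⟨r, hrS⟩ hS]) (csInf_le ⟨1, hS⟩ hrS)
  rw [Real.log_div hstar.det_pos.ne' hΘ.det_pos.ne']
  linarith
end

section
/- Let Θ* ∈ Ω_F(γ) (i.e., ‖Θ*‖_F ≤ γ, Θ* ≻ 0) be a precision matrix with Σ* = Θ*⁻¹, and define the population negative log-likelihood ℓ(Θ) = −log det Θ + tr(Σ* Θ). Then for any graph G whose edge set misses at least one edge of supp(Θ*), every Θ ∈ Ω_F(γ) with supp(Θ) ⊆ E(G) satisfies ℓ(Θ) − ℓ(Θ*) = 2 KL(q_{Θ*} || q_Θ) ≥ log(c_{Θ*}). -/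
open Matrix
open scoped MatrixOrder

lemma detColLin {p : ℕ} (M : Matrix (Fin p) (Fin p) ℝ) (jj : Fin p) (c : Fin p → ℝ) :
    (M.updateCol jj c).det = ∑ k, c k * (M.updateCol jj (Pi.single k 1)).det := by
  have hrep : c = ∑ k, c k • (Pi.single k (1:ℝ) : Fin p → ℝ) := by
    ext l
    simp [Pi.single_apply]
  let L : (Fin p → ℝ) →ₗ[ℝ] ℝ :=
    { toFun := fun v => (M.updateCol jj v).det
      map_add' := fun a b => Matrix.det_updateCol_add M jj a b
      map_smul' := fun s a => Matrix.det_updateCol_smul M jj s a }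
  have : (M.updateCol jj c).det = L c := rfl
  rw [this]
  nth_rewrite 1 [hrep]
  rw [map_sum]
  simp only [_root_.map_smul, smul_eq_mul]
  rfl

lemma updateColumn_comm {p : ℕ} (M : Matrix (Fin p) (Fin p) ℝ) {i j : Fin p} (hij : i ≠ j)
    (u w : Fin p → ℝ) :
    (M.updateCol i u).updateCol j w = (M.updateCol j w).updateCol i u := by
  ext k l
  by_cases h1 : l = j <;> by_cases h2 : l = i <;>
    simp_all [Matrix.updateCol_apply]

lemma detTwoUpdate {p : ℕ} (i j : Fin p) (hij : i ≠ j) (u w : Fin p → ℝ) :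
    (((1 : Matrix (Fin p) (Fin p) ℝ).updateCol i u).updateCol j w).det
      = u i * w j - u j * w i := by
  classical
  have base : ∀ k l : Fin p,
      ((((1 : Matrix (Fin p) (Fin p) ℝ).updateCol i (Pi.single k 1)).updateCol j
        (Pi.single l 1))).det
      = (if k = i ∧ l = j then 1 else if k = j ∧ l = i then -1 else 0) := by
    intro k l
    rcases eq_or_ne k i with hk | hk
    · rcases eq_or_ne l j with hl | hl
      · have hm : (((1 : Matrix (Fin p) (Fin p) ℝ).updateCol i (Pi.single k 1)).updateCol j
            (Pi.single l 1)) = 1 := by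
          ext a b
          by_cases h1 : b = j <;> by_cases h2 : b = i <;>
            simp_all [Matrix.updateCol_apply, Matrix.one_apply, Pi.single_apply, eq_comm]
        rw [hm, Matrix.det_one]
        simp [hk, hl]
      · rcases eq_or_ne l i with hl2 | hl2
        · rw [Matrix.det_zero_of_column_eq hij (fun a => by
            simp [Matrix.updateCol_apply, hij, Ne.symm hij, hk, hl2])]
          simp [hk, hl, hij, Ne.symm hij]
        · rw [Matrix.det_zero_of_column_eq (show l ≠ j from hl) (fun a => by
            simp [Matrix.updateCol_apply, hl, hl2, Matrix.one_apply, Pi.single_apply, eq_comm])]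
          simp [hl, hl2, hk, hij]
    · rcases eq_or_ne k j with hk2 | hk2
      · rcases eq_or_ne l i with hl | hl
        · have hm : (((1 : Matrix (Fin p) (Fin p) ℝ).updateCol i (Pi.single k 1)).updateCol j
              (Pi.single l 1)) = (1 : Matrix (Fin p) (Fin p) ℝ).submatrix id (Equiv.swap i j) := by
            ext a b
            by_cases h1 : b = j <;> by_cases h2 : b = i <;>
              simp_all [Matrix.updateCol_apply, Matrix.one_apply, Pi.single_apply,
                Matrix.submatrix_apply, Equiv.swap_apply_def, eq_comm]
          rw [hm, Matrix.det_permute']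
          simp [Equiv.Perm.sign_swap hij, hk, hk2, hl, hij, Ne.symm hij]
        · rcases eq_or_ne l j with hl2 | hl2
          · rw [Matrix.det_zero_of_column_eq hij (fun a => by
              simp [Matrix.updateCol_apply, hij, Ne.symm hij, hk2, hl2])]
            simp [hk, hl, hl2, hij, Ne.symm hij]
          · rw [Matrix.det_zero_of_column_eq (show l ≠ j from hl2) (fun a => by
              simp [Matrix.updateCol_apply, hl2, hl, Matrix.one_apply, Pi.single_apply,
                eq_comm])]
            simp [hl, hl2, hk]
      · rw [Matrix.det_zero_of_column_eq (show k ≠ i from hk) (fun a => by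
          simp [Matrix.updateCol_apply, hk, hk2, Ne.symm hk2, hij, Ne.symm hij,
            Matrix.one_apply, Pi.single_apply, eq_comm])]
        simp [hk, hk2]
  have expand : (((1 : Matrix (Fin p) (Fin p) ℝ).updateCol i u).updateCol j w).det
      = ∑ k, ∑ l, w k * (u l *
        (if l = i ∧ k = j then (1:ℝ) else if l = j ∧ k = i then -1 else 0)) := by
    rw [detColLin]
    refine Finset.sum_congr rfl fun k _ => ?_
    rw [updateColumn_comm _ hij, detColLin, Finset.mul_sum]
    refine Finset.sum_congr rfl fun l _ => ?_
    rw [updateColumn_comm _ (Ne.symm hij), base l k]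
  rw [expand, Finset.sum_comm]
  have key : ∀ l, ∑ k, w k * (u l *
      (if l = i ∧ k = j then (1:ℝ) else if l = j ∧ k = i then -1 else 0))
      = (if l = i then u i * w j else 0) + (if l = j then -(u j * w i) else 0) := by
    intro l
    by_cases hl : l = i
    · subst hl
      rw [Finset.sum_eq_single j]
      · simp [hij]; ring
      · intro k _ hk
        simp [hk, hij]
      · simp
    · by_cases hl2 : l = j
      · subst hl2
        rw [Finset.sum_eq_single i]
        · simp [hl, Ne.symm hij]; ring
        · intro k _ hk
          simp [hk, hl]
        · simp [hl]
      · simp [hl, hl2]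
  rw [Finset.sum_congr rfl fun l _ => key l]
  rw [Finset.sum_add_distrib, Finset.sum_ite_eq', Finset.sum_ite_eq']
  simp
  ring


lemma logdet_le_trace {p : ℕ} {N : Matrix (Fin p) (Fin p) ℝ} (hN : N.PosDef) :
    Real.log N.det ≤ N.trace - p := by
  classical
  have hdet : N.det = ∏ k, hN.isHermitian.eigenvalues k := by
    simpa using hN.isHermitian.det_eq_prod_eigenvalues
  have htr : N.trace = ∑ k, hN.isHermitian.eigenvalues k := by
    simpa using hN.isHermitian.trace_eq_sum_eigenvalues
  have hpos : ∀ k, 0 < hN.isHermitian.eigenvalues k := hN.eigenvalues_pos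
  rw [hdet, htr, Real.log_prod (fun k _ => (hpos k).ne')]
  have : ∀ k : Fin p, Real.log (hN.isHermitian.eigenvalues k)
      ≤ hN.isHermitian.eigenvalues k - 1 := fun k => Real.log_le_sub_one_of_pos (hpos k)
  calc ∑ k, Real.log (hN.isHermitian.eigenvalues k)
      ≤ ∑ k, (hN.isHermitian.eigenvalues k - 1) := Finset.sum_le_sum fun k _ => this k
    _ = (∑ k, hN.isHermitian.eigenvalues k) - p := by
        rw [Finset.sum_sub_distrib]
        simp


-- symmetric dot product swap
lemma dot_symm {p : ℕ} {S : Matrix (Fin p) (Fin p) ℝ} (hS : S.IsHermitian)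
    (u v : Fin p → ℝ) : u ⬝ᵥ (S *ᵥ v) = v ⬝ᵥ (S *ᵥ u) := by
  rw [Matrix.dotProduct_mulVec, ← Matrix.mulVec_transpose]
  have : Sᵀ = S := by
    have := hS.eq
    rwa [Matrix.conjTranspose_eq_transpose_of_trivial] at this
  rw [this, dotProduct_comm]

lemma posdef_diag {p : ℕ} {A : Matrix (Fin p) (Fin p) ℝ} (hA : A.PosDef) (a : Fin p) :
    0 < A a a := by
  have := hA.dotProduct_mulVec_pos (x := Pi.single a 1) (by
    intro h
    have := congrFun h a
    simp [Pi.single_apply] at this)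
  simpa [Matrix.mulVec_single, single_dotProduct] using this

lemma apply_symm {p : ℕ} {A : Matrix (Fin p) (Fin p) ℝ} (hA : A.IsHermitian) (a b : Fin p) :
    A a b = A b a := by
  have := congrFun (congrFun hA.eq a) b
  simpa [Matrix.conjTranspose_apply] using this.symm

lemma minor_pos' {p : ℕ} {A : Matrix (Fin p) (Fin p) ℝ} (hA : A.PosDef) {a b : Fin p}
    (hab : a ≠ b) : 0 < A a a * A b b - (A a b) ^ 2 := by
  set d := A b b with hd
  have hdpos : 0 < d := posdef_diag hA b
  set β := A a b with hβ
  have hsymm : A b a = β := apply_symm hA.1 b a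
  set x : Fin p → ℝ := d • (Pi.single a 1 : Fin p → ℝ) - β • (Pi.single b 1 : Fin p → ℝ) with hx
  have hxne : x ≠ 0 := by
    intro h
    have : x a = 0 := by rw [h]; rfl
    rw [hx] at this
    simp [Pi.single_apply, hab, Ne.symm hab] at this
    exact hdpos.ne' this
  have hq := hA.dotProduct_mulVec_pos hxne
  have hxq : x ⬝ᵥ (A *ᵥ x) = d * (A a a * d - β ^ 2) := by
    rw [hx]
    simp only [Matrix.mulVec_sub, Matrix.mulVec_smul, Matrix.mulVec_single,
      dotProduct_sub, sub_dotProduct, smul_dotProduct,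
      dotProduct_smul]
    simp only [single_dotProduct, smul_eq_mul, Pi.smul_apply, Pi.sub_apply, Matrix.col_apply,
      MulOpposite.op_one, one_smul]
    have hba : A b a = A a b := apply_symm hA.1 b a
    ring_nf
    rw [hba]
    ring
  have : 0 < d * (A a a * d - β ^ 2) := by
    rw [← hxq]
    simpa using hq
  nlinarith [hdpos]


lemma trace_std_mul {p : ℕ} (a b : Fin p) (s : ℝ) (B : Matrix (Fin p) (Fin p) ℝ) :
    (Matrix.single a b s * B).trace = s * B b a := by
  classical
  rw [Matrix.trace]
  rw [Finset.sum_eq_single a]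
  · simp [Matrix.diag]
  · intro k _ hk
    simp [Matrix.diag, Matrix.single_mul_apply_of_ne (h := hk)]
  · simp

lemma std_herm {p : ℕ} (a b : Fin p) (s : ℝ) :
    (Matrix.single a b s + Matrix.single b a s).IsHermitian := by
  rw [Matrix.IsHermitian]
  ext k l
  simp only [Matrix.conjTranspose_apply, Matrix.add_apply, star_trivial]
  rw [Matrix.single, Matrix.single]
  simp only [Matrix.of_apply]
  by_cases h1 : a = k <;> by_cases h2 : b = l <;> by_cases h3 : a = l <;> by_cases h4 : b = k <;>
    simp_all

lemma Mposdef {p : ℕ} {A : Matrix (Fin p) (Fin p) ℝ} (hA : A.PosDef) {i j : Fin p} (hij : i ≠ j) :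
    (A⁻¹ + (Matrix.single i j (A i j / (A i i * A j j - A i j ^ 2)) +
      Matrix.single j i (A i j / (A i i * A j j - A i j ^ 2)))).PosDef := by
  classical
  set a := A i i with ha
  set d := A j j with hd
  set β := A i j with hβ
  have hD : 0 < a * d - β ^ 2 := minor_pos' hA hij
  have hapos : 0 < a := posdef_diag hA i
  have hdpos : 0 < d := posdef_diag hA j
  set t := β / (a * d - β ^ 2) with ht
  refine Matrix.PosDef.of_dotProduct_mulVec_pos (hA.inv.1.add (std_herm i j t)) ?_
  intro x hx
  have hsx : star x = x := by ext k; simp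
  rw [hsx]
  -- expand the Δ part
  have hΔ : x ⬝ᵥ ((Matrix.single i j t + Matrix.single j i t) *ᵥ x)
      = 2 * t * (x i * x j) := by
    rw [Matrix.add_mulVec, dotProduct_add, Matrix.single_mulVec,
      Matrix.single_mulVec]
    have h1 : ∀ (c : ℝ) (k : Fin p), (Function.update (0 : Fin p → ℝ) k c) = Pi.single k c := by
      intro c k; ext l; simp [Function.update, Pi.single_apply, eq_comm]
    rw [h1, h1, dotProduct_single, dotProduct_single]
    ring
  rw [Matrix.add_mulVec, dotProduct_add, hΔ]
  set y1 := x i with hy1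
  set y2 := x j with hy2
  by_cases hy : y1 = 0 ∧ y2 = 0
  · have := hA.inv.dotProduct_mulVec_pos hx
    rw [hsx] at this
    rw [hy.1, hy.2]
    simpa using this
  · -- the Schur-complement style bound
    set z1 := (d * y1 - β * y2) / (a * d - β ^ 2) with hz1
    set z2 := (a * y2 - β * y1) / (a * d - β ^ 2) with hz2
    set z : Fin p → ℝ := z1 • (Pi.single i 1 : Fin p → ℝ) + z2 • (Pi.single j 1 : Fin p → ℝ)
      with hz
    have h0' := hA.inv.posSemidef.dotProduct_mulVec_nonneg (x - A *ᵥ z)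
    have hsx2 : star (x - A *ᵥ z) = x - A *ᵥ z := by ext k; simp
    rw [hsx2] at h0'
    have hAiA : A⁻¹ *ᵥ (A *ᵥ z) = z := by
      rw [Matrix.mulVec_mulVec, Matrix.nonsing_inv_mul _ hA.det_pos.ne'.isUnit, Matrix.one_mulVec]
    have hexp : (x - A *ᵥ z) ⬝ᵥ (A⁻¹ *ᵥ (x - A *ᵥ z))
        = x ⬝ᵥ (A⁻¹ *ᵥ x) - 2 * (x ⬝ᵥ z) + z ⬝ᵥ (A *ᵥ z) := by
      rw [Matrix.mulVec_sub, dotProduct_sub, sub_dotProduct,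
        sub_dotProduct, hAiA]
      have e1 : (A *ᵥ z) ⬝ᵥ (A⁻¹ *ᵥ x) = x ⬝ᵥ z := by
        rw [dot_symm hA.inv.1, hAiA]
      have e2 : (A *ᵥ z) ⬝ᵥ z = z ⬝ᵥ (A *ᵥ z) := dotProduct_comm _ _
      rw [e1, e2]
      ring
    -- compute x ⬝ᵥ z
    have hxz : x ⬝ᵥ z = z1 * y1 + z2 * y2 := by
      rw [hz]
      simp only [dotProduct_add, dotProduct_smul, smul_eq_mul,
        dotProduct_single, mul_one]
      try ring
    -- compute z ⬝ᵥ (A *ᵥ z)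
    have hzAz : z ⬝ᵥ (A *ᵥ z) = z1 ^ 2 * a + 2 * z1 * z2 * β + z2 ^ 2 * d := by
      rw [hz]
      simp only [Matrix.mulVec_add, Matrix.mulVec_smul, Matrix.mulVec_single,
        dotProduct_add, dotProduct_smul, add_dotProduct,
        smul_dotProduct, single_dotProduct, smul_eq_mul, Pi.add_apply,
        Pi.smul_apply, mul_one, Matrix.col_apply, MulOpposite.op_one, one_smul]
      have hba : A j i = β := by rw [hβ]; exact apply_symm hA.1 j i
      rw [hba]
      ring
    have halg : 2 * (z1 * y1 + z2 * y2) - (z1 ^ 2 * a + 2 * z1 * z2 * β + z2 ^ 2 * d)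
        + 2 * t * (y1 * y2) = (d * y1 ^ 2 + a * y2 ^ 2) / (a * d - β ^ 2) := by
      rw [hz1, hz2, ht]
      generalize hDD : a * d - β ^ 2 = D at hD ⊢
      have hDne := hD.ne'
      field_simp
      subst hDD
      ring
    have hpos2 : 0 < (d * y1 ^ 2 + a * y2 ^ 2) / (a * d - β ^ 2) := by
      have hyy : 0 < d * y1 ^ 2 + a * y2 ^ 2 := by
        rcases not_and_or.mp hy with h | h
        · have : 0 < y1 ^ 2 := pow_pos (abs_pos.mpr h) 2 |>.trans_eq (by rw [sq_abs])
          nlinarith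
        · have : 0 < y2 ^ 2 := pow_pos (abs_pos.mpr h) 2 |>.trans_eq (by rw [sq_abs])
          nlinarith
      exact div_pos hyy hD
    rw [hexp, hxz, hzAz] at h0'
    linarith [h0', hpos2, halg]

lemma Mdet {p : ℕ} {A : Matrix (Fin p) (Fin p) ℝ} (hA : A.PosDef) {i j : Fin p} (hij : i ≠ j) :
    (A⁻¹ + (Matrix.single i j (A i j / (A i i * A j j - A i j ^ 2)) +
      Matrix.single j i (A i j / (A i i * A j j - A i j ^ 2)))).det
    = (A i i * A j j / (A i i * A j j - A i j ^ 2)) / A.det := by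
  classical
  set a := A i i with ha
  set d := A j j with hd
  set β := A i j with hβ
  have hD : 0 < a * d - β ^ 2 := minor_pos' hA hij
  set t := β / (a * d - β ^ 2) with ht
  set M := A⁻¹ + (Matrix.single i j t + Matrix.single j i t) with hM
  set u : Fin p → ℝ := fun k => (if k = i then (1:ℝ) else 0) + A k j * t with hu
  set w : Fin p → ℝ := fun k => (if k = j then (1:ℝ) else 0) + A k i * t with hw
  have hup : A * M = ((1 : Matrix (Fin p) (Fin p) ℝ).updateCol i u).updateCol j w := by
    rw [hM, Matrix.mul_add, Matrix.mul_nonsing_inv _ hA.det_pos.ne'.isUnit, Matrix.mul_add]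
    ext k l
    rcases eq_or_ne l j with hl | hl
    · subst hl
      simp [Matrix.updateCol_apply, hw, Matrix.one_apply,
        Matrix.mul_single_apply_same,
        Matrix.mul_single_apply_of_ne (hbj := Ne.symm hij)]
    · rcases eq_or_ne l i with hl2 | hl2
      · subst hl2
        simp [Matrix.updateCol_apply, hu, hl, Matrix.one_apply,
          Matrix.mul_single_apply_same,
          Matrix.mul_single_apply_of_ne (hbj := hij)]
      · simp [Matrix.updateCol_apply, hl, hl2, Matrix.one_apply,
          Matrix.mul_single_apply_of_ne (hbj := hl),
          Matrix.mul_single_apply_of_ne (hbj := hl2)]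
  have hdet := congrArg Matrix.det hup
  rw [Matrix.det_mul, detTwoUpdate i j hij] at hdet
  have hji : A j i = β := by rw [hβ]; exact apply_symm hA.1 j i
  have hval : u i * w j - u j * w i = a * d / (a * d - β ^ 2) := by
    rw [hu, hw]
    simp only [if_pos rfl, if_neg hij, if_neg (Ne.symm hij), ↓reduceIte, ← ha, ← hd, ← hβ]
    rw [hji, ht]
    field_simp
    ring
  rw [hval] at hdet
  have hAdet : A.det ≠ 0 := hA.det_pos.ne'
  field_simp at hdet ⊢
  linarith [hdet]


/-- Population negative log-likelihood: with `Σ* = Θ*⁻¹` and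
`ℓ(Θ) = −log det Θ + tr(Σ* Θ)`, for any feasible `Θ ∈ Ω_F(γ)` whose support misses an
edge `(i,j)` of `Θ*`, the excess `ℓ(Θ) − ℓ(Θ*)` equals `2·KL(q_{Θ*}‖q_Θ)` and is at
least `log c_{Θ*}`. -/
theorem stmt14 {p : ℕ} (γ : ℝ) (Θstar Θ : Matrix (Fin p) (Fin p) ℝ)
    (hstar : Θstar.PosDef) (hΘ : Θ.PosDef)
    (hγstar : Real.sqrt (∑ i, ∑ j, (Θstar i j) ^ 2) ≤ γ)
    (hγ : Real.sqrt (∑ i, ∑ j, (Θ i j) ^ 2) ≤ γ)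
    (i j : Fin p) (hij : i ≠ j) (hne : Θstar i j ≠ 0) (hzero : Θ i j = 0) :
    ((-Real.log Θ.det + (Θstar⁻¹ * Θ).trace) -
        (-Real.log Θstar.det + (Θstar⁻¹ * Θstar).trace)) =
      2 * ((1 / 2) * ((Θ * Θstar⁻¹).trace - (p : ℝ) + Real.log (Θstar.det / Θ.det))) ∧
    ((-Real.log Θ.det + (Θstar⁻¹ * Θ).trace) -
        (-Real.log Θstar.det + (Θstar⁻¹ * Θstar).trace)) ≥
      Real.log (sInf {r : ℝ | ∃ a b : Fin p, a ≠ b ∧ Θstar a b ≠ 0 ∧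
        r = Θstar a a * Θstar b b / (Θstar a a * Θstar b b - (Θstar a b) ^ 2)}) := by
  classical
  have hAdet : 0 < Θstar.det := hstar.det_pos
  have hBdet : 0 < Θ.det := hΘ.det_pos
  have htrinv : (Θstar⁻¹ * Θstar).trace = (p : ℝ) := by
    rw [Matrix.nonsing_inv_mul _ hAdet.ne'.isUnit, Matrix.trace_one]
    simp
  constructor
  · rw [htrinv, Real.log_div hAdet.ne' hBdet.ne', Matrix.trace_mul_comm Θstar⁻¹ Θ]
    ring
  · -- the inequality
    set c : ℝ := Θstar i i * Θstar j j / (Θstar i i * Θstar j j - Θstar i j ^ 2) with hc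
    have hD : 0 < Θstar i i * Θstar j j - Θstar i j ^ 2 := minor_pos' hstar hij
    have hcpos : 0 < c := by
      rw [hc]
      exact div_pos (mul_pos (posdef_diag hstar i) (posdef_diag hstar j)) hD
    set t : ℝ := Θstar i j / (Θstar i i * Θstar j j - Θstar i j ^ 2) with ht
    set M : Matrix (Fin p) (Fin p) ℝ :=
      Θstar⁻¹ + (Matrix.single i j t + Matrix.single j i t) with hM
    have hMpos : M.PosDef := Mposdef hstar hij
    have hMdet : M.det = c / Θstar.det := Mdet hstar hij
    have hMdetpos : 0 < M.det := by rw [hMdet]; exact div_pos hcpos hAdet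
    -- trace identity
    have hΔtr : ((Matrix.single i j t + Matrix.single j i t) * Θ).trace = 0 := by
      rw [Matrix.add_mul, Matrix.trace_add, trace_std_mul, trace_std_mul]
      have : Θ j i = 0 := by rw [apply_symm hΘ.1 j i, hzero]
      rw [this, hzero]
      ring
    have htrM : (M * Θ).trace = (Θstar⁻¹ * Θ).trace := by
      rw [hM, Matrix.add_mul, Matrix.trace_add, hΔtr, add_zero]
    -- the sqrt congruence matrix
    set S : Matrix (Fin p) (Fin p) ℝ := CFC.sqrt Θ with hS
    have hsq : S * S = Θ := CFC.sqrt_mul_sqrt_self Θ hΘ.posSemidef.nonneg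
    have hSh : S.IsHermitian := (CFC.sqrt_nonneg Θ).posSemidef.1
    have hSdet : S.det * S.det = Θ.det := by rw [← Matrix.det_mul, hsq]
    have hSdetne : S.det ≠ 0 := by
      intro h
      rw [h, mul_zero] at hSdet
      exact hBdet.ne' hSdet.symm
    have hNpos : (S * M * S).PosDef := by
      refine Matrix.PosDef.of_dotProduct_mulVec_pos ?_ ?_
      · have := Matrix.isHermitian_conjTranspose_mul_mul S hMpos.1
        rwa [hSh.eq] at this
      · intro x hx
        have hinj : Function.Injective (S.mulVec) :=
          Matrix.mulVec_injective_iff_isUnit.mpr ((Matrix.isUnit_iff_isUnit_det _).2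
            hSdetne.isUnit)
        have hSx : S *ᵥ x ≠ 0 := by
          intro h
          apply hx
          apply hinj
          rw [h, Matrix.mulVec_zero]
        have h2 := hMpos.dotProduct_mulVec_pos hSx
        have hrw : S * M * S = Sᴴ * M * S := by rw [hSh.eq]
        rw [hrw]
        simpa only [Matrix.star_mulVec, Matrix.dotProduct_mulVec, Matrix.vecMul_vecMul]
          using h2
    have hNtr : (S * M * S).trace = (M * Θ).trace := by
      rw [Matrix.trace_mul_cycle, hsq, Matrix.trace_mul_comm]
    have hNdet : (S * M * S).det = M.det * Θ.det := by
      rw [Matrix.det_mul, Matrix.det_mul]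
      rw [← hSdet]
      ring
    have hkey := logdet_le_trace hNpos
    rw [hNtr, hNdet, htrM, Real.log_mul hMdetpos.ne' hBdet.ne'] at hkey
    have hlogM : Real.log M.det = Real.log c - Real.log Θstar.det := by
      rw [hMdet, Real.log_div hcpos.ne' hAdet.ne']
    -- sInf facts
    set Sset : Set ℝ := {r : ℝ | ∃ a b : Fin p, a ≠ b ∧ Θstar a b ≠ 0 ∧
        r = Θstar a a * Θstar b b / (Θstar a a * Θstar b b - (Θstar a b) ^ 2)} with hSset
    have hcmem : c ∈ Sset := ⟨i, j, hij, hne, rfl⟩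
    have hlb : ∀ r ∈ Sset, (1:ℝ) ≤ r := by
      rintro r ⟨a, b, hab, hab0, rfl⟩
      have hD2 : 0 < Θstar a a * Θstar b b - Θstar a b ^ 2 := minor_pos' hstar hab
      rw [le_div_iff₀ hD2]
      nlinarith [sq_nonneg (Θstar a b)]
    have hsinf_le : sInf Sset ≤ c := csInf_le ⟨1, fun r hr => hlb r hr⟩ hcmem
    have hsinf_pos : 0 < sInf Sset :=
      lt_of_lt_of_le one_pos (le_csInf ⟨c, hcmem⟩ hlb)
    have hlog_le : Real.log (sInf Sset) ≤ Real.log c := Real.log_le_log hsinf_pos hsinf_le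
    rw [htrinv]
    have := hkey
    linarith [hlog_le, hkey, hlogM]
end
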